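/- arXiv:2002.05699 — 4 statements merged into one kernel-verified Lean document; each statement's English description precedes it below -/
import Mathlib

section
/- Let Y and Y' be random variables taking values in a finite set 𝒴 ⊆ ℝ with max_{y∈𝒴} |y| ≤ K. Suppose that for every y ∈ 𝒴, P[Y = y] ≤ e^ε · P[Y' = y] and P[Y' = y] ≤ e^ε · P[Y = y]. Then |E[Y] - E[Y']| ≤ (e^ε - 1) · K. -/
lemma dp_exp_one_side
    (Y : Finset ℝ) (K ε : ℝ) (hε : 0 ≤ ε)
    (P P' : ℝ → ℝ)
    (hP : ∀ y ∈ Y, 0 ≤ P y) (hP' : ∀ y ∈ Y, 0 ≤ P' y)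
    (hPsum : ∑ y ∈ Y, P y = 1) (hP'sum : ∑ y ∈ Y, P' y = 1)
    (hK : ∀ y ∈ Y, |y| ≤ K)
    (h1 : ∀ y ∈ Y, P y ≤ Real.exp ε * P' y)
    (h2 : ∀ y ∈ Y, P' y ≤ Real.exp ε * P y) :
    (∑ y ∈ Y, P y * y) - ∑ y ∈ Y, P' y * y ≤ (Real.exp ε - 1) * K := by
  have hYne : Y.Nonempty := by
    by_contra h
    rw [Finset.not_nonempty_iff_eq_empty] at h
    simp [h] at hPsum
  obtain ⟨y0, hy0⟩ := hYne
  have hK0 : 0 ≤ K := le_trans (abs_nonneg y0) (hK y0 hy0)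
  have he1 : (1:ℝ) ≤ Real.exp ε := by
    rw [← Real.exp_zero]; exact Real.exp_le_exp.mpr hε
  set A := ∑ y ∈ Y, P y * y with hA
  set B := ∑ y ∈ Y, P' y * y with hB
  -- |A| ≤ K, |B| ≤ K
  have habs : ∀ (Q : ℝ → ℝ), (∀ y ∈ Y, 0 ≤ Q y) → (∑ y ∈ Y, Q y = 1) →
      |∑ y ∈ Y, Q y * y| ≤ K := by
    intro Q hQ hQs
    calc |∑ y ∈ Y, Q y * y| ≤ ∑ y ∈ Y, |Q y * y| := Finset.abs_sum_le_sum_abs _ _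
      _ ≤ ∑ y ∈ Y, Q y * K := by
          apply Finset.sum_le_sum
          intro y hy
          rw [abs_mul, abs_of_nonneg (hQ y hy)]
          exact mul_le_mul_of_nonneg_left (hK y hy) (hQ y hy)
      _ = K := by rw [← Finset.sum_mul, hQs, one_mul]
  have hAK : |A| ≤ K := habs P hP hPsum
  have hBK : |B| ≤ K := habs P' hP' hP'sum
  -- Fact1 : A + K ≤ exp ε * (B + K)
  have fact1 : A + K ≤ Real.exp ε * (B + K) := by
    have : ∑ y ∈ Y, P y * (y + K) ≤ ∑ y ∈ Y, Real.exp ε * (P' y * (y + K)) := by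
      apply Finset.sum_le_sum
      intro y hy
      have hyK : 0 ≤ y + K := by
        have := (abs_le.mp (hK y hy)).1; linarith
      rw [← mul_assoc]
      exact mul_le_mul_of_nonneg_right (h1 y hy) hyK
    have lhs : ∑ y ∈ Y, P y * (y + K) = A + K := by
      simp [mul_add, Finset.sum_add_distrib, hA, ← Finset.sum_mul, hPsum]
    have rhs : ∑ y ∈ Y, Real.exp ε * (P' y * (y + K)) = Real.exp ε * (B + K) := by
      rw [← Finset.mul_sum]
      congr 1
      simp [mul_add, Finset.sum_add_distrib, hB, ← Finset.sum_mul, hP'sum]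
    rwa [lhs, rhs] at this
  -- Fact2 : K - B ≤ exp ε * (K - A)
  have fact2 : K - B ≤ Real.exp ε * (K - A) := by
    have : ∑ y ∈ Y, P' y * (K - y) ≤ ∑ y ∈ Y, Real.exp ε * (P y * (K - y)) := by
      apply Finset.sum_le_sum
      intro y hy
      have hyK : 0 ≤ K - y := by
        have := (abs_le.mp (hK y hy)).2; linarith
      rw [← mul_assoc]
      exact mul_le_mul_of_nonneg_right (h2 y hy) hyK
    have lhs : ∑ y ∈ Y, P' y * (K - y) = K - B := by
      simp [mul_sub, Finset.sum_sub_distrib, hB, ← Finset.sum_mul, hP'sum]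
    have rhs : ∑ y ∈ Y, Real.exp ε * (P y * (K - y)) = Real.exp ε * (K - A) := by
      rw [← Finset.mul_sum]
      congr 1
      simp [mul_sub, Finset.sum_sub_distrib, hA, ← Finset.sum_mul, hPsum]
    rwa [lhs, rhs] at this
  rw [abs_le] at hAK hBK
  rcases le_or_gt 0 A with hA0 | hA0
  · nlinarith [fact2, hAK.1, hAK.2]
  · rcases le_or_gt 0 B with hB0 | hB0
    · nlinarith
    · nlinarith [fact1]

/-- Stability of expectation for ε-DP: if two distributions on a finite set of
reals bounded by `K` are pointwise within a factor `e^ε` of each other, their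
expectations differ by at most `(e^ε - 1) K`. -/
theorem dp_expectation_stability
    (Y : Finset ℝ) (K ε : ℝ) (hε : 0 ≤ ε)
    (P P' : ℝ → ℝ)
    (hP : ∀ y ∈ Y, 0 ≤ P y) (hP' : ∀ y ∈ Y, 0 ≤ P' y)
    (hPsum : ∑ y ∈ Y, P y = 1) (hP'sum : ∑ y ∈ Y, P' y = 1)
    (hK : ∀ y ∈ Y, |y| ≤ K)
    (h1 : ∀ y ∈ Y, P y ≤ Real.exp ε * P' y)
    (h2 : ∀ y ∈ Y, P' y ≤ Real.exp ε * P y) :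
    |(∑ y ∈ Y, P y * y) - ∑ y ∈ Y, P' y * y| ≤ (Real.exp ε - 1) * K := by
  rw [abs_sub_le_iff]
  exact ⟨dp_exp_one_side Y K ε hε P P' hP hP' hPsum hP'sum hK h1 h2,
         dp_exp_one_side Y K ε hε P' P hP' hP hP'sum hPsum hK h2 h1⟩
end

section
/- Let ε ∈ (0,1] and δ ≥ 0 with δ < e^{-8}·ε/8. There exist a finite integer price range P and a number of agents n (both depending on ε) such that every algorithm A mapping valuation profiles to (random) prices, which is (ε,δ)-differentially private with respect to changing a single agent's valuation, has worst-case expected loss at least ((e^{-8} - 8δ/ε)/(1 + e^{-8}))·(1/ε), where the loss on a data set is the optimal number of feasible trades minus the expected number of feasible trades at the price output by A. -/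
/-- A data set: valuations of `n` sellers and `n` buyers. -/
abbrev DataSet (n : ℕ) := (Fin n → ℕ) × (Fin n → ℕ)

/-- Number of feasible trades at price `p`: sellers with valuation ≤ p matched
to buyers with valuation ≥ p. -/
def numTrades {n : ℕ} (D : DataSet n) (p : ℕ) : ℕ :=
  min (Finset.univ.filter (fun i => D.1 i ≤ p)).card
      (Finset.univ.filter (fun j => p ≤ D.2 j)).card

/-- Optimal number of feasible trades over prices in `{1, …, V}`. -/
def optTrades {n : ℕ} (V : ℕ) (D : DataSet n) : ℕ :=
  (Finset.Icc 1 V).sup (numTrades D)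

/-- Two data sets are neighbors if they differ in a single agent's valuation. -/
def Neighbor {n : ℕ} (D D' : DataSet n) : Prop :=
  (∃ i, (∀ i', i' ≠ i → D.1 i' = D'.1 i') ∧ D.2 = D'.2) ∨
  (∃ j, (∀ j', j' ≠ j → D.2 j' = D'.2 j') ∧ D.1 = D'.1)

/-- Expected loss of a randomized pricing algorithm `A` (a pmf over prices
`{1,…,V}` for each data set) on data set `D`. -/
noncomputable def expLoss {n : ℕ} (V : ℕ) (A : DataSet n → ℕ → ℝ)
    (D : DataSet n) : ℝ :=
  (optTrades V D : ℝ) - ∑ p ∈ Finset.Icc 1 V, A D p * (numTrades D p : ℝ)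

def Dt (m t : ℕ) : DataSet m :=
  (fun i => (if (i : ℕ) < t then 2*m else 0) + 1 + i,
   fun j => (if (j : ℕ) < t - m then 2*m else 0) + m + j)

lemma Dt_neighbor {m t : ℕ} (ht : t < 2*m) : Neighbor (Dt m (t+1)) (Dt m t) := by
  rcases lt_or_ge t m with h | h
  · left
    refine ⟨⟨t, h⟩, fun i' hne => ?_, ?_⟩
    · have hv : (i' : ℕ) ≠ t := fun hh => hne (Fin.ext hh)
      simp only [Dt]
      split_ifs <;> omega
    · funext j
      simp only [Dt]
      split_ifs <;> omega
  · right
    refine ⟨⟨t - m, by omega⟩, fun j' hne => ?_, ?_⟩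
    · have hv : (j' : ℕ) ≠ t - m := fun hh => hne (Fin.ext hh)
      simp only [Dt]
      split_ifs <;> omega
    · funext i
      simp only [Dt]
      have := i.isLt
      split_ifs <;> omega

lemma nt_le {n : ℕ} (D : DataSet n) (p : ℕ) : numTrades D p ≤ n := by
  refine le_trans (min_le_left _ _) (le_trans (Finset.card_filter_le _ _) ?_)
  simp

lemma nt0_zero {m p : ℕ} (hp : 2*m < p) : numTrades (Dt m 0) p = 0 := by
  have h : (Finset.univ.filter (fun j : Fin m => p ≤ (Dt m 0).2 j)) = ∅ := by
    refine Finset.filter_eq_empty_iff.mpr fun j _ => ?_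
    simp only [Dt]
    have := j.isLt
    split_ifs <;> omega
  simp [numTrades, h]

lemma ntl_zero {m p : ℕ} (hp : p ≤ 2*m) : numTrades (Dt m (2*m)) p = 0 := by
  have h : (Finset.univ.filter (fun i : Fin m => (Dt m (2*m)).1 i ≤ p)) = ∅ := by
    refine Finset.filter_eq_empty_iff.mpr fun i _ => ?_
    simp only [Dt]
    have := i.isLt
    split_ifs <;> omega
  simp [numTrades, h]

lemma nt0_at {m : ℕ} : numTrades (Dt m 0) m = m := by
  have h1 : (Finset.univ.filter (fun i : Fin m => (Dt m 0).1 i ≤ m)) = Finset.univ := by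
    refine Finset.filter_true_of_mem fun i _ => ?_
    simp only [Dt]; have := i.isLt; split_ifs <;> omega
  have h2 : (Finset.univ.filter (fun j : Fin m => m ≤ (Dt m 0).2 j)) = Finset.univ := by
    refine Finset.filter_true_of_mem fun j _ => ?_
    simp only [Dt]; have := j.isLt; split_ifs <;> omega
  simp [numTrades, h1, h2]

lemma ntl_at {m : ℕ} : numTrades (Dt m (2*m)) (3*m) = m := by
  have h1 : (Finset.univ.filter (fun i : Fin m => (Dt m (2*m)).1 i ≤ 3*m)) = Finset.univ := by
    refine Finset.filter_true_of_mem fun i _ => ?_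
    simp only [Dt]; have := i.isLt; split_ifs <;> omega
  have h2 : (Finset.univ.filter (fun j : Fin m => 3*m ≤ (Dt m (2*m)).2 j)) = Finset.univ := by
    refine Finset.filter_true_of_mem fun j _ => ?_
    simp only [Dt]; have := j.isLt; split_ifs <;> omega
  simp [numTrades, h1, h2]

lemma opt0 {m : ℕ} (hm : 1 ≤ m) : optTrades (4*m) (Dt m 0) = m := by
  refine le_antisymm (Finset.sup_le fun p _ => nt_le _ p) ?_
  have hmem : m ∈ Finset.Icc 1 (4*m) := by
    simp only [Finset.mem_Icc]; omega
  calc m = numTrades (Dt m 0) m := nt0_at.symm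
    _ ≤ _ := Finset.le_sup hmem

lemma optl {m : ℕ} (hm : 1 ≤ m) : optTrades (4*m) (Dt m (2*m)) = m := by
  refine le_antisymm (Finset.sup_le fun p _ => nt_le _ p) ?_
  have hmem : 3*m ∈ Finset.Icc 1 (4*m) := by
    simp only [Finset.mem_Icc]; omega
  calc m = numTrades (Dt m (2*m)) (3*m) := ntl_at.symm
    _ ≤ _ := Finset.le_sup hmem

lemma Dt_mem {m t : ℕ} (ht : t ≤ 2*m) :
    (∀ i : Fin m, (Dt m t).1 i ∈ Finset.Icc 1 (4*m)) ∧
    (∀ j : Fin m, (Dt m t).2 j ∈ Finset.Icc 1 (4*m)) := by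
  constructor <;> intro x <;>
    (simp only [Dt, Finset.mem_Icc]; have := x.isLt; split_ifs <;> omega)

set_option maxHeartbeats 2000000 in
/-- Lower bound for private call auctions: for any `ε ∈ (0,1]` and
`δ < e^{-8} ε / 8`, there exist a price range `{1,…,V}` and a number of agents
`n` such that every `(ε,δ)`-differentially private price-selection algorithm
suffers, on some data set with valuations in `{1,…,V}`, expected loss at least
`((e^{-8} - 8δ/ε)/(1 + e^{-8}))·(1/ε)`. -/
theorem private_auction_lower_bound
    (ε δ : ℝ) (hε0 : 0 < ε) (hε1 : ε ≤ 1) (hδ0 : 0 ≤ δ)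
    (hδ : δ < Real.exp (-8) * ε / 8) :
    ∃ V n : ℕ, 0 < V ∧ 0 < n ∧
      ∀ A : DataSet n → ℕ → ℝ,
        (∀ D p, 0 ≤ A D p) →
        (∀ D, ∑ p ∈ Finset.Icc 1 V, A D p = 1) →
        (∀ D D' : DataSet n, Neighbor D D' → ∀ E : Finset ℕ, E ⊆ Finset.Icc 1 V →
          ∑ p ∈ E, A D p ≤ Real.exp ε * ∑ p ∈ E, A D' p + δ) →
        ∃ D : DataSet n,
          (∀ i, D.1 i ∈ Finset.Icc 1 V) ∧ (∀ j, D.2 j ∈ Finset.Icc 1 V) ∧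
          ((Real.exp (-8) - 8 * δ / ε) / (1 + Real.exp (-8))) * (1 / ε)
            ≤ expLoss V A D := by
  have hεinv : (1:ℝ) ≤ 1/ε := by
    rw [le_div_iff₀ hε0]; linarith
  set m : ℕ := ⌈1/ε⌉₊ with hm_def
  have hm1 : 1 ≤ m := Nat.one_le_ceil_iff.mpr (by positivity)
  have hmR : 1/ε ≤ (m:ℝ) := Nat.le_ceil _
  have hmR2 : (m:ℝ) ≤ 2/ε := by
    have h := Nat.ceil_lt_add_one (show (0:ℝ) ≤ 1/ε by positivity)
    have : (m:ℝ) < 1/ε + 1 := h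
    have h2 : 1/ε + 1 ≤ 2/ε := by
      have : (2:ℝ)/ε = 1/ε + 1/ε := by ring
      linarith
    linarith
  refine ⟨4*m, m, by omega, hm1, ?_⟩
  intro A hA0 hA1 hP
  set E0 : Finset ℕ := Finset.Ioc 0 (2*m) with hE0_def
  set E1 : Finset ℕ := Finset.Ioc (2*m) (4*m) with hE1_def
  have hIcc : Finset.Icc 1 (4*m) = Finset.Ioc 0 (4*m) := by
    ext x; simp only [Finset.mem_Icc, Finset.mem_Ioc]; omega
  have hE1sub : E1 ⊆ Finset.Icc 1 (4*m) := by
    intro x hx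
    simp only [hE1_def, Finset.mem_Ioc] at hx
    simp only [Finset.mem_Icc]; omega
  have hsplit : ∀ f : ℕ → ℝ,
      ∑ p ∈ Finset.Icc 1 (4*m), f p = ∑ p ∈ E0, f p + ∑ p ∈ E1, f p := by
    intro f
    rw [hIcc, ← Finset.sum_Ioc_consecutive f (by omega : 0 ≤ 2*m) (by omega : 2*m ≤ 4*m)]
  set q0 : ℝ := ∑ p ∈ E0, A (Dt m 0) p with hq0_def
  set S0 : ℝ := ∑ p ∈ E1, A (Dt m 0) p with hS0_def
  set ql : ℝ := ∑ p ∈ E1, A (Dt m (2*m)) p with hql_def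
  have hq0S0 : q0 + S0 = 1 := by
    rw [hq0_def, hS0_def, ← hsplit (A (Dt m 0))]; exact hA1 _
  have hq0nn : 0 ≤ q0 := Finset.sum_nonneg fun p _ => hA0 _ p
  have hS0nn : 0 ≤ S0 := Finset.sum_nonneg fun p _ => hA0 _ p
  have hqlnn : 0 ≤ ql := Finset.sum_nonneg fun p _ => hA0 _ p
  -- loss lower bounds
  have hL0 : (m:ℝ) * (1 - q0) ≤ expLoss (4*m) A (Dt m 0) := by
    unfold expLoss
    rw [opt0 hm1, hsplit]
    have h1 : ∑ p ∈ E0, A (Dt m 0) p * (numTrades (Dt m 0) p : ℝ)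
        ≤ ∑ p ∈ E0, A (Dt m 0) p * (m:ℝ) :=
      Finset.sum_le_sum fun p _ =>
        mul_le_mul_of_nonneg_left (Nat.cast_le.mpr (nt_le _ p)) (hA0 _ _)
    rw [← Finset.sum_mul] at h1
    have h2 : ∑ p ∈ E1, A (Dt m 0) p * (numTrades (Dt m 0) p : ℝ) = 0 := by
      refine Finset.sum_eq_zero fun p hp => ?_
      have hpm : 2*m < p := by
        simp only [hE1_def, Finset.mem_Ioc] at hp; omega
      rw [nt0_zero hpm]; simp
    have hq0' : (∑ i ∈ E0, A (Dt m 0) i) = q0 := rfl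
    rw [h2]
    nlinarith [h1, hq0']
  have hLl : (m:ℝ) * (1 - ql) ≤ expLoss (4*m) A (Dt m (2*m)) := by
    unfold expLoss
    rw [optl hm1, hsplit]
    have h1 : ∑ p ∈ E1, A (Dt m (2*m)) p * (numTrades (Dt m (2*m)) p : ℝ)
        ≤ ∑ p ∈ E1, A (Dt m (2*m)) p * (m:ℝ) :=
      Finset.sum_le_sum fun p _ =>
        mul_le_mul_of_nonneg_left (Nat.cast_le.mpr (nt_le _ p)) (hA0 _ _)
    rw [← Finset.sum_mul] at h1
    have h2 : ∑ p ∈ E0, A (Dt m (2*m)) p * (numTrades (Dt m (2*m)) p : ℝ) = 0 := by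
      refine Finset.sum_eq_zero fun p hp => ?_
      have hpm : p ≤ 2*m := by
        simp only [hE0_def, Finset.mem_Ioc] at hp; omega
      rw [ntl_zero hpm]; simp
    have hql' : (∑ i ∈ E1, A (Dt m (2*m)) i) = ql := rfl
    rw [h2]
    nlinarith [h1, hql']
  -- group privacy chain
  have chain : ∀ t, t ≤ 2*m →
      ∑ p ∈ E1, A (Dt m t) p ≤ Real.exp (t*ε) * S0 + t * δ * Real.exp (t*ε) := by
    intro t
    induction t with
    | zero => intro _; simp [hS0_def]
    | succ t ih =>
      intro ht
      have ih' := ih (by omega)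
      have hnb : Neighbor (Dt m (t+1)) (Dt m t) := Dt_neighbor (by omega)
      have hstep := hP _ _ hnb E1 hE1sub
      have hexppos : (0:ℝ) < Real.exp ε := Real.exp_pos _
      have hee : Real.exp (((t:ℕ)+1:ℕ)*ε) = Real.exp ε * Real.exp (t*ε) := by
        rw [← Real.exp_add]; push_cast; ring_nf
      have h1e : (1:ℝ) ≤ Real.exp (((t:ℕ)+1:ℕ)*ε) := by
        apply Real.one_le_exp; positivity
    -- combine
      have hmul := mul_le_mul_of_nonneg_left ih' hexppos.le
      calc ∑ p ∈ E1, A (Dt m (t+1)) p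
          ≤ Real.exp ε * (∑ p ∈ E1, A (Dt m t) p) + δ := hstep
        _ ≤ Real.exp ε * (Real.exp (t*ε) * S0 + t * δ * Real.exp (t*ε)) + δ := by
            linarith
        _ = Real.exp (((t:ℕ)+1:ℕ)*ε) * S0 + (t:ℝ) * δ * Real.exp (((t:ℕ)+1:ℕ)*ε) + δ := by
            rw [hee]; ring
        _ ≤ Real.exp (((t:ℕ)+1:ℕ)*ε) * S0 + ((t:ℕ)+1:ℕ) * δ * Real.exp (((t:ℕ)+1:ℕ)*ε) := by
            have hd : δ * 1 ≤ δ * Real.exp (((t:ℕ)+1:ℕ)*ε) :=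
              mul_le_mul_of_nonneg_left h1e hδ0
            push_cast at hd ⊢
            nlinarith [hd]
  have hchain := chain (2*m) le_rfl
  push_cast at hchain
  -- hchain : ql ≤ exp(2mε) S0 + 2m δ exp(2mε)
  have hmε : (m:ℝ) * ε ≤ 2 := (le_div_iff₀ hε0).mp hmR2
  have hqleq : (∑ p ∈ E1, A (Dt m (2*m)) p) = ql := rfl
  rw [hqleq] at hchain
  have hx8 : 2*(m:ℝ)*ε ≤ 8 := by nlinarith [hmε]
  have hexp8 : Real.exp (2*(m:ℝ)*ε) ≤ Real.exp 8 := Real.exp_le_exp.mpr (by linarith)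
  have hq : ql ≤ Real.exp 8 * S0 + 2*(m:ℝ)*δ * Real.exp 8 := by
    have a1 : Real.exp (2*(m:ℝ)*ε) * S0 ≤ Real.exp 8 * S0 :=
      mul_le_mul_of_nonneg_right hexp8 hS0nn
    have a2 : 2*(m:ℝ)*δ * Real.exp (2*(m:ℝ)*ε) ≤ 2*(m:ℝ)*δ * Real.exp 8 :=
      mul_le_mul_of_nonneg_left hexp8 (by positivity)
    linarith [hchain]
  have e1 : Real.exp (-8) * Real.exp 8 = 1 := by
    rw [← Real.exp_add]; norm_num
  have hkey : Real.exp (-8) * ql ≤ S0 + 8*δ/ε := by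
    have b1 := mul_le_mul_of_nonneg_left hq (Real.exp_pos (-8)).le
    have b2 : Real.exp (-8) * (Real.exp 8 * S0 + 2*(m:ℝ)*δ*Real.exp 8)
        = S0 + 2*(m:ℝ)*δ := by
      calc Real.exp (-8) * (Real.exp 8 * S0 + 2*(m:ℝ)*δ*Real.exp 8)
          = (Real.exp (-8)*Real.exp 8) * S0
            + 2*(m:ℝ)*δ*(Real.exp (-8)*Real.exp 8) := by ring
        _ = S0 + 2*(m:ℝ)*δ := by rw [e1]; ring
    rw [b2] at b1
    have hmd : 2*(m:ℝ)*δ ≤ 8*δ/ε := by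
      have c1 : (m:ℝ)*δ ≤ (2/ε)*δ := mul_le_mul_of_nonneg_right hmR2 hδ0
      have c2 : 0 ≤ δ/ε := by positivity
      have c3 : (2/ε)*δ = 2*(δ/ε) := by ring
      have c4 : 8*δ/ε = 8*(δ/ε) := by ring
      linarith [c1, c2]
    linarith
  set L := max (expLoss (4*m) A (Dt m 0)) (expLoss (4*m) A (Dt m (2*m))) with hL_def
  have c1 : (m:ℝ)*(1-q0) ≤ L := le_trans hL0 (le_max_left _ _)
  have c2e : Real.exp (-8) * ((m:ℝ)*(1-ql)) ≤ Real.exp (-8) * L :=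
    mul_le_mul_of_nonneg_left (le_trans hLl (le_max_right _ _)) (Real.exp_pos (-8)).le
  have hint : (m:ℝ) * (Real.exp (-8) * ql) ≤ (m:ℝ) * (S0 + 8*δ/ε) :=
    mul_le_mul_of_nonneg_left hkey (Nat.cast_nonneg m)
  have hMsum : (m:ℝ)*(q0+S0) = (m:ℝ)*1 := by rw [hq0S0]
  have key : (m:ℝ) * (Real.exp (-8) - 8*δ/ε) ≤ (1+Real.exp (-8)) * L := by
    linarith [c1, c2e, hint, hMsum]
  have hβnn : 0 ≤ Real.exp (-8) - 8*δ/ε := by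
    have : 8*δ/ε ≤ Real.exp (-8) := by
      rw [div_le_iff₀ hε0]; nlinarith [hδ]
    linarith
  have hden : (0:ℝ) < 1 + Real.exp (-8) := by positivity
  have hfin : ((Real.exp (-8) - 8*δ/ε)/(1+Real.exp (-8))) * (1/ε) ≤ L := by
    have s1 : ((Real.exp (-8) - 8*δ/ε)/(1+Real.exp (-8))) * (1/ε)
        ≤ ((Real.exp (-8) - 8*δ/ε)/(1+Real.exp (-8))) * (m:ℝ) :=
      mul_le_mul_of_nonneg_left hmR (div_nonneg hβnn hden.le)
    have s2 : ((Real.exp (-8) - 8*δ/ε)/(1+Real.exp (-8))) * (m:ℝ) ≤ L := by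
      rw [div_mul_eq_mul_div, div_le_iff₀ hden]
      nlinarith [key]
    linarith
  rcases le_total (expLoss (4*m) A (Dt m 0)) (expLoss (4*m) A (Dt m (2*m))) with h | h
  · exact ⟨Dt m (2*m), (Dt_mem le_rfl).1, (Dt_mem le_rfl).2,
      le_trans hfin (by rw [hL_def]; exact max_le h le_rfl)⟩
  · exact ⟨Dt m 0, (Dt_mem (by omega)).1, (Dt_mem (by omega)).2,
      le_trans hfin (by rw [hL_def]; exact max_le le_rfl h)⟩
end

section
/- Consider valuation vectors v^s ∈ {1,…,V}^{n^s} for sellers and v^b ∈ {1,…,V}^{n^b} for buyers, and suppose OPT' := max_p min(#{i : vᵢˢ < p}, #{j : vⱼᵇ > p}) > 0. Define ν^b = max{v : #{j : vⱼᵇ ≥ v} ≥ OPT'} and ν^s = min{v : #{i : vᵢˢ ≤ v} ≥ OPT'}. Then ν^b ≥ ν^s + 2. -/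
/-- Number of strictly profitable trades at price `p`. -/
def strictTrades {ns nb : ℕ} (vs : Fin ns → ℕ) (vb : Fin nb → ℕ) (p : ℕ) : ℕ :=
  min (Finset.univ.filter (fun i => vs i < p)).card
      (Finset.univ.filter (fun j => p < vb j)).card

/-- Gap between the OPT'-th highest buyer valuation and the OPT'-th lowest
seller valuation: `ν^b ≥ ν^s + 2`. -/
theorem buyer_seller_gap {ns nb V : ℕ}
    (vs : Fin ns → ℕ) (vb : Fin nb → ℕ)
    (hvs : ∀ i, vs i ∈ Finset.Icc 1 V) (hvb : ∀ j, vb j ∈ Finset.Icc 1 V)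
    (OPT' : ℕ) (hOPT : OPT' = sSup (Set.range (strictTrades vs vb)))
    (hpos : 0 < OPT')
    (νb νs : ℕ)
    (hνb : νb = sSup {v : ℕ |
      OPT' ≤ (Finset.univ.filter (fun j => v ≤ vb j)).card})
    (hνs : νs = sInf {v : ℕ |
      OPT' ≤ (Finset.univ.filter (fun i => vs i ≤ v)).card}) :
    νs + 2 ≤ νb := by
  have hbdd : BddAbove (Set.range (strictTrades vs vb)) := by
    refine ⟨ns, ?_⟩
    rintro x ⟨p, rfl⟩
    exact le_trans (min_le_left _ _)
      (le_trans (Finset.card_filter_le _ _) (by simp))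
  have hne : (Set.range (strictTrades vs vb)).Nonempty := ⟨_, ⟨0, rfl⟩⟩
  obtain ⟨p, hp⟩ := Set.mem_range.mp (Nat.sSup_mem hne hbdd)
  rw [← hOPT] at hp
  have ha : OPT' ≤ (Finset.univ.filter (fun i => vs i < p)).card := by
    rw [← hp]; exact min_le_left _ _
  have hb : OPT' ≤ (Finset.univ.filter (fun j => p < vb j)).card := by
    rw [← hp]; exact min_le_right _ _
  have hppos : 0 < p := by
    obtain ⟨i, hi⟩ := Finset.card_pos.mp (lt_of_lt_of_le hpos ha)
    simp only [Finset.mem_filter] at hi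
    exact lt_of_le_of_lt (Nat.zero_le _) hi.2
  -- νs ≤ p - 1
  have hfeq : (Finset.univ.filter (fun i => vs i ≤ p - 1)) =
      (Finset.univ.filter (fun i => vs i < p)) := by
    ext i; simp only [Finset.mem_filter, Finset.mem_univ, true_and]; omega
  have hνs' : νs ≤ p - 1 := by
    rw [hνs]
    exact Nat.sInf_le (by simp only [Set.mem_setOf_eq, hfeq]; exact ha)
  -- νb ≥ p + 1
  have hbddb : BddAbove {v : ℕ |
      OPT' ≤ (Finset.univ.filter (fun j => v ≤ vb j)).card} := by
    refine ⟨V, fun v hv => ?_⟩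
    obtain ⟨j, hj⟩ := Finset.card_pos.mp (lt_of_lt_of_le hpos hv)
    simp only [Finset.mem_filter, Finset.mem_univ, true_and] at hj
    have := Finset.mem_Icc.mp (hvb j)
    omega
  have hfeq2 : (Finset.univ.filter (fun j => p + 1 ≤ vb j)) =
      (Finset.univ.filter (fun j => p < vb j)) := by
    ext j; simp only [Finset.mem_filter, Finset.mem_univ, true_and]; omega
  have hνb' : p + 1 ≤ νb := by
    rw [hνb]
    exact le_csSup hbddb (by simp only [Set.mem_setOf_eq, hfeq2]; exact hb)
  omega
end

section
/- Consider valuation profiles with OPT' > 0, where OPT' = max_p min(#{i : vᵢˢ < p}, #{j : vⱼᵇ > p}). Let ν^b and ν^s be defined as the OPT'-th highest buyer valuation and OPT'-th lowest seller valuation respectively. Then for every integer price p with ν^s ≤ p ≤ ν^b, min(#{i : vᵢˢ ≤ p}, #{j : vⱼᵇ ≥ p}) ≥ OPT'; moreover, for every price p with p > ν^b or p < ν^s, min(#{i : vᵢˢ ≤ p}, #{j : vⱼᵇ ≥ p}) < OPT', namely #{j : vⱼᵇ ≥ p} < OPT' when p > ν^b and #{i : vᵢˢ ≤ p} < OPT'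 when p < ν^s. -/
/-- Characterization of prices clearing at least `OPT'` shares under truthful
bidding: every integer price in `[ν^s, ν^b]` clears at least `OPT'` shares,
while prices above `ν^b` lack `OPT'` willing buyers and prices below `ν^s`
lack `OPT'` willing sellers. -/
theorem price_range_clearing {ns nb V : ℕ}
    (vs : Fin ns → ℕ) (vb : Fin nb → ℕ)
    (hvs : ∀ i, vs i ∈ Finset.Icc 1 V) (hvb : ∀ j, vb j ∈ Finset.Icc 1 V)
    (OPT' : ℕ) (hOPT : OPT' = sSup (Set.range (strictTrades vs vb)))
    (hpos : 0 < OPT')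
    (νb νs : ℕ)
    (hνb : νb = sSup {v : ℕ |
      OPT' ≤ (Finset.univ.filter (fun j => v ≤ vb j)).card})
    (hνs : νs = sInf {v : ℕ |
      OPT' ≤ (Finset.univ.filter (fun i => vs i ≤ v)).card}) :
    (∀ p : ℕ, νs ≤ p → p ≤ νb →
      OPT' ≤ min (Finset.univ.filter (fun i => vs i ≤ p)).card
                 (Finset.univ.filter (fun j => p ≤ vb j)).card) ∧
    (∀ p : ℕ, νb < p →
      (Finset.univ.filter (fun j => p ≤ vb j)).card < OPT') ∧
    (∀ p : ℕ, p < νs →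
      (Finset.univ.filter (fun i => vs i ≤ p)).card < OPT') := by
  set f := strictTrades vs vb with hf
  have hbdd : BddAbove (Set.range f) := by
    refine ⟨nb, ?_⟩
    rintro _ ⟨p, rfl⟩
    exact (min_le_right _ _).trans ((Finset.card_filter_le _ _).trans (by simp))
  have hne : (Set.range f).Nonempty := ⟨f 0, 0, rfl⟩
  have hmem : OPT' ∈ Set.range f := hOPT ▸ Nat.sSup_mem hne hbdd
  obtain ⟨p0, hp0⟩ := hmem
  have hse : OPT' ≤ (Finset.univ.filter (fun i => vs i < p0)).card := by
    rw [← hp0]; exact min_le_left _ _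
  have hbe : OPT' ≤ (Finset.univ.filter (fun j => p0 < vb j)).card := by
    rw [← hp0]; exact min_le_right _ _
  set Sb : Set ℕ := {v : ℕ | OPT' ≤ (Finset.univ.filter (fun j => v ≤ vb j)).card} with hSb
  set Ss : Set ℕ := {v : ℕ | OPT' ≤ (Finset.univ.filter (fun i => vs i ≤ v)).card} with hSs
  have hSbne : Sb.Nonempty := by
    refine ⟨p0 + 1, ?_⟩
    have : (Finset.univ.filter (fun j => p0 + 1 ≤ vb j))
        = (Finset.univ.filter (fun j => p0 < vb j)) := by
      apply Finset.filter_congr; intro x _; exact Iff.rfl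
    simpa [hSb, this] using hbe
  have hSbbdd : BddAbove Sb := by
    refine ⟨V, ?_⟩
    intro v hv
    by_contra hVv
    push_neg at hVv
    have : (Finset.univ.filter (fun j => v ≤ vb j)) = ∅ := by
      apply Finset.filter_false_of_mem
      intro j _
      have := hvb j
      simp only [Finset.mem_Icc] at this
      omega
    rw [hSb] at hv
    simp only [Set.mem_setOf_eq, this, Finset.card_empty] at hv
    omega
  have hSsne : Ss.Nonempty := by
    refine ⟨V, ?_⟩
    have hOPTns : OPT' ≤ ns := hse.trans ((Finset.card_filter_le _ _).trans (by simp))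
    have : (Finset.univ.filter (fun i => vs i ≤ V)) = Finset.univ := by
      apply Finset.filter_true_of_mem
      intro i _
      have := hvs i
      simp only [Finset.mem_Icc] at this
      omega
    rw [hSs]
    simp only [Set.mem_setOf_eq, this, Finset.card_univ, Fintype.card_fin]
    exact hOPTns
  have hνbmem : νb ∈ Sb := hνb ▸ Nat.sSup_mem hSbne hSbbdd
  have hνsmem : νs ∈ Ss := hνs ▸ Nat.sInf_mem hSsne
  refine ⟨?_, ?_, ?_⟩
  · intro p hsp hpb
    refine le_min ?_ ?_
    · refine hνsmem.trans (Finset.card_le_card ?_)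
      intro i hi
      simp only [Finset.mem_filter] at hi ⊢
      exact ⟨hi.1, hi.2.trans hsp⟩
    · refine hνbmem.trans (Finset.card_le_card ?_)
      intro j hj
      simp only [Finset.mem_filter] at hj ⊢
      exact ⟨hj.1, hpb.trans hj.2⟩
  · intro p hp
    by_contra h
    push_neg at h
    have hpSb : p ∈ Sb := h
    have : p ≤ νb := hνb ▸ le_csSup hSbbdd hpSb
    omega
  · intro p hp
    by_contra h
    push_neg at h
    have hpSs : p ∈ Ss := h
    have : νs ≤ p := hνs ▸ Nat.sInf_le hpSs
    omega
end
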